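/- Every element of G = GL_n(F_q) has a unique expression as a product u_1 w h_b h_a u_2 where w ∈ W, u_1 ∈ U_{w^{-1}}^- = { u ∈ U : w u w^{-1} ∈ w_0 U w_0 } (w_0 the permutation matrix with 1's on the antidiagonal), h_b ∈ H_b, h_a ∈ H_a, and u_2 ∈ U. In particular, the subgroup WH_b of G is a complete set of representatives for the (B_a, B_a)-double cosets of G. -/

import Mathlib

noncomputable section

open scoped Pointwise

/-- The general linear group `GL_n(K)`. -/
abbrev GLn (K : Type) [Field K] (n : ℕ) : Type := GL (Fin n) K

/-- `g` is a permutation matrix. -/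
def IsPermMat {K : Type} [Field K] {n : ℕ} (g : GLn K n) : Prop :=
  ∃ σ : Equiv.Perm (Fin n),
    ∀ i j : Fin n, (g : Matrix (Fin n) (Fin n) K) i j = if σ j = i then 1 else 0

/-- `W`, the group of permutation matrices in `GL_n(K)`. -/
def Wset (K : Type) [Field K] (n : ℕ) : Set (GLn K n) := {g | IsPermMat g}

/-- The set `S = {s_1, …, s_{n-1}}` of Coxeter generators of `W`: the matrices of the
adjacent transpositions `(i, i+1)`. -/
def Sset (K : Type) [Field K] (n : ℕ) : Set (GLn K n) :=
  {g | ∃ i j : Fin n, (i : ℕ) + 1 = (j : ℕ) ∧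
    ∀ k l : Fin n, (g : Matrix (Fin n) (Fin n) K) k l = if Equiv.swap i j l = k then 1 else 0}

/-- The set `𝒯 = { w s_i w⁻¹ : w ∈ W, s_i ∈ S }` of reflections of `W`. -/
def Tset (K : Type) [Field K] (n : ℕ) : Set (GLn K n) :=
  {t | ∃ w ∈ Wset K n, ∃ s ∈ Sset K n, t = w * s * w⁻¹}

/-- `H_b`: the group of diagonal matrices whose entries are `b`-th roots of unity
(i.e. entries in `F_b`). -/
def Hbset (K : Type) [Field K] (n b : ℕ) : Set (GLn K n) :=
  {g | (∀ i j : Fin n, i ≠ j → (g : Matrix (Fin n) (Fin n) K) i j = 0) ∧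
    ∀ i : Fin n, (g : Matrix (Fin n) (Fin n) K) i i ^ b = 1}

/-- The group `WH_b`: the set of products `w * d` with `w ∈ W` and `d ∈ H_b`. -/
def WHbset (K : Type) [Field K] (n b : ℕ) : Set (GLn K n) :=
  {x | ∃ w ∈ Wset K n, ∃ d ∈ Hbset K n b, x = w * d}

/-- The length function on monomial matrices: the number of inversions of the underlying
permutation.  For `x = w d ∈ WH_b` this is the Coxeter length `ℓ(w)`, i.e. `len` is the
length function of `W` lifted to `WH_b` via `ℓ(wd) = ℓ(dw) = ℓ(w)`. -/
def len {K : Type} [Field K] {n : ℕ} (g : GLn K n) : ℕ :=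
  Set.ncard {p : Fin n × Fin n | p.1 < p.2 ∧ ∃ i i' : Fin n, i' < i ∧
    (g : Matrix (Fin n) (Fin n) K) i p.1 ≠ 0 ∧ (g : Matrix (Fin n) (Fin n) K) i' p.2 ≠ 0}

/-- The diagonal matrix `h_{k,l}(α) = h_k(α) h_l((-1)^{b-1} α⁻¹)`. -/
def hmat (K : Type) [Field K] {n : ℕ} (b : ℕ) (k l : Fin n) (α : K) :
    Matrix (Fin n) (Fin n) K :=
  Matrix.diagonal fun p => if p = k then α else if p = l then (-1 : K) ^ (b - 1) * α⁻¹ else 1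

/-- For a reflection `t` interchanging the `k`-th and `l`-th standard basis vectors
(`t = w s_i w⁻¹`), the subset `X_t = { w h_{i,i+1}(α) w⁻¹ : α ∈ F_b } =
{ h_{k,l}(α) : α^b = 1 }` of `H_b`. -/
def Xset (K : Type) [Field K] (n b : ℕ) (t : GLn K n) : Set (GLn K n) :=
  {d | ∃ k l : Fin n, ∃ α : K, α ^ b = 1 ∧ k ≠ l ∧
    (∀ p q : Fin n, (t : Matrix (Fin n) (Fin n) K) p q = if Equiv.swap k l q = p then 1 else 0) ∧
    (d : Matrix (Fin n) (Fin n) K) = hmat K b k l α}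

/-- `X_s = { h_{k,l}(α) : α^b = 1 }` for the simple reflection `s` interchanging the
`k`-th and `l`-th standard basis vectors. -/
def XsPair (K : Type) [Field K] {n : ℕ} (b : ℕ) (k l : Fin n) : Set (GLn K n) :=
  {d | ∃ α : K, α ^ b = 1 ∧ (d : Matrix (Fin n) (Fin n) K) = hmat K b k l α}

/-- The product `X_1 ⋯ X_r` of a list of subsets of a monoid. -/
def SetProd {G : Type} [Monoid G] : List (Set G) → Set G
  | [] => {1}
  | X :: L => X * SetProd L

/-- `U`: the group of upper triangular unipotent matrices. -/
def Uset (K : Type) [Field K] (n : ℕ) : Set (GLn K n) :=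
  {g | (∀ i j : Fin n, j < i → (g : Matrix (Fin n) (Fin n) K) i j = 0) ∧
    ∀ i : Fin n, (g : Matrix (Fin n) (Fin n) K) i i = 1}

/-- `H_a`: the group of diagonal matrices with entries in `F_a` (the `a`-th roots of unity). -/
def Haset (K : Type) [Field K] (n a : ℕ) : Set (GLn K n) :=
  {g | (∀ i j : Fin n, i ≠ j → (g : Matrix (Fin n) (Fin n) K) i j = 0) ∧
    ∀ i : Fin n, (g : Matrix (Fin n) (Fin n) K) i i ^ a = 1}

/-- `B_a = H_a U`. -/
def Baset (K : Type) [Field K] (n a : ℕ) : Set (GLn K n) :=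
  {g | ∃ h ∈ Haset K n a, ∃ u ∈ Uset K n, g = h * u}


/-!
Gaussian elimination which always pivots on the lowest nonzero entry of the first remaining
column uses only upper unitriangular row and column operations, and the row operations only add
the pivot row to rows above it. Recursing on the complementary minor writes every invertible
matrix as `u₁ w d u₂` with `u₁, u₂ ∈ U`, `w` a permutation matrix, `d` an invertible diagonal
matrix and `w⁻¹ u₁ w` lower triangular.

If `v w d = w' d' v'` with `v, v' ∈ U`, the nonzero entries `(w j, j)` of the left side force
`w'⁻¹ w j ≤ j` for all `j`, hence `w = w'` and then `d = d'`. With `w d` fixed,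
`u₂' u₂⁻¹ = (w d)⁻¹ u₁'⁻¹ u₁ (w d)` is upper unitriangular and, since `w⁻¹ u₁ w` and
`w⁻¹ u₁' w` are lower triangular, also lower triangular; so it is `1`.

Since `a` and `b` are coprime with `ab = q - 1`, every `x ∈ F_q^×` is uniquely `x = β α` with
`β^b = α^a = 1`, which splits `d = h_b h_a`. For the double cosets, `H_a` normalizes `U`, so an
element of `B_a x B_a` with `x = w h_b` has monomial part `w h_b h` with `h ∈ H_a`, and the
splitting recovers `h_b`.
-/

lemma Equiv.Perm.eq_one_of_forall_apply_le {ι : Type*} [LinearOrder ι] [WellFoundedLT ι]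
    {π : Equiv.Perm ι} (h : ∀ j, π j ≤ j) : π = 1 := by
  ext j
  induction j using WellFoundedLT.induction with
  | _ j ih =>
    refine (h j).antisymm (not_lt.1 fun hlt => hlt.ne (π.injective (ih _ hlt)))

section RootsOfUnity

variable {G : Type*} [CommGroup G] {a b : ℕ}

lemma exists_mul_eq_of_pow_mul_eq_one (hab : a.Coprime b) {x : G} (hx : x ^ (a * b) = 1) :
    ∃ y z : G, y ^ b = 1 ∧ z ^ a = 1 ∧ y * z = x := by
  have hbezout : (a : ℤ) * a.gcdA b + b * a.gcdB b = 1 := by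
    rw [← Nat.gcd_eq_gcd_ab, hab.gcd_eq_one, Nat.cast_one]
  have hx' : x ^ ((a : ℤ) * b) = 1 := by exact_mod_cast hx
  refine ⟨x ^ ((a : ℤ) * a.gcdA b), x ^ ((b : ℤ) * a.gcdB b), ?_, ?_, ?_⟩
  · rw [← zpow_natCast, ← zpow_mul, show (a : ℤ) * a.gcdA b * b = a * b * a.gcdA b by ring,
      zpow_mul, hx', one_zpow]
  · rw [← zpow_natCast, ← zpow_mul, show (b : ℤ) * a.gcdB b * a = a * b * a.gcdB b by ring,
      zpow_mul, hx', one_zpow]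
  · rw [← zpow_add, hbezout, zpow_one]

lemma eq_and_eq_of_mul_eq_mul_of_pow_eq_one (hab : a.Coprime b) {y z y' z' : G} (hy : y ^ b = 1)
    (hz : z ^ a = 1) (hy' : y' ^ b = 1) (hz' : z' ^ a = 1) (h : y * z = y' * z') :
    y = y' ∧ z = z' := by
  have hw : y'⁻¹ * y = z' * z⁻¹ :=
    calc y'⁻¹ * y = y'⁻¹ * (y * z) * z⁻¹ := by group
      _ = y'⁻¹ * (y' * z') * z⁻¹ := by rw [h]
      _ = z' * z⁻¹ := by group
  have hw1 : y'⁻¹ * y = 1 := (pow_eq_one_iff_of_coprime hab).1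
    ⟨by rw [hw, mul_pow, inv_pow, hz, hz', inv_one, one_mul],
      by rw [mul_pow, inv_pow, hy, hy', inv_one, one_mul]⟩
  obtain rfl : y' = y := inv_mul_eq_one.1 hw1
  exact ⟨rfl, mul_left_cancel h⟩

end RootsOfUnity

/-- The permutation of `Fin (n + 1)` sending `0` to `i₀` and `q.succ` to `i₀.succAbove (σ q)`. -/
def Fin.insertPerm {n : ℕ} (i₀ : Fin (n + 1)) (σ : Equiv.Perm (Fin n)) : Equiv.Perm (Fin (n + 1)) :=
  finSuccEquiv n |>.trans <| (Equiv.optionCongr σ).trans (finSuccEquiv' i₀).symm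

@[simp]
lemma Fin.insertPerm_zero {n : ℕ} (i₀ : Fin (n + 1)) (σ : Equiv.Perm (Fin n)) :
    Fin.insertPerm i₀ σ 0 = i₀ := by
  simp [Fin.insertPerm]

@[simp]
lemma Fin.insertPerm_succ {n : ℕ} (i₀ : Fin (n + 1)) (σ : Equiv.Perm (Fin n)) (q : Fin n) :
    Fin.insertPerm i₀ σ q.succ = i₀.succAbove (σ q) := by
  simp [Fin.insertPerm]

namespace Matrix

section Unitriangular

variable {ι R : Type*} [LinearOrder ι] [CommRing R]

def IsUnitriangular (A : Matrix ι ι R) : Prop :=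
  A.IsUpperTriangular ∧ ∀ i, A i i = 1

lemma IsUpperTriangular.mul_apply_self [Fintype ι] {A B : Matrix ι ι R} (hA : A.IsUpperTriangular)
    (hB : B.IsUpperTriangular) (i : ι) : (A * B) i i = A i i * B i i := by
  rw [mul_apply, Finset.sum_eq_single i (fun k _ hk => ?_) (by simp)]
  rcases hk.lt_or_gt with h | h
  · rw [hA h, zero_mul]
  · rw [hB h, mul_zero]

namespace IsUnitriangular

variable {A B : Matrix ι ι R}

lemma one : IsUnitriangular (1 : Matrix ι ι R) :=
  ⟨blockTriangular_one, fun _ => one_apply_eq _⟩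

lemma mul [Fintype ι] (hA : IsUnitriangular A) (hB : IsUnitriangular B) : IsUnitriangular (A * B) :=
  ⟨hA.1.mul hB.1, fun i => by rw [hA.1.mul_apply_self hB.1, hA.2, hB.2, one_mul]⟩

lemma det_eq_one [Fintype ι] (hA : IsUnitriangular A) : A.det = 1 := by
  simp [det_of_isUpperTriangular hA.1, hA.2]

lemma inv [Fintype ι] (hA : IsUnitriangular A) : IsUnitriangular A⁻¹ := by
  let := invertibleOfIsUnitDet A (by simp [hA.det_eq_one])
  have hinv : A⁻¹.IsUpperTriangular := blockTriangular_inv_of_blockTriangular hA.1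
  refine ⟨hinv, fun i => ?_⟩
  simpa [hinv.mul_apply_self hA.1, hA.2] using congrFun₂ (inv_mul_of_invertible A) i i

lemma diagonal_mul_mul_diagonal [Fintype ι] (hA : IsUnitriangular A) {e f : ι → R}
    (hef : ∀ i, e i * f i = 1) : IsUnitriangular (diagonal e * A * diagonal f) := by
  refine ⟨fun i j hji => ?_, fun i => ?_⟩
  · simp [hA.1 hji]
  · simp [hA.2, hef]

lemma eq_one_of_isLowerTriangular (hA : IsUnitriangular A) (hL : A.IsLowerTriangular) :
    A = 1 := by
  ext i j
  rcases lt_trichotomy i j with h | rfl | h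
  · rw [hL h, one_apply_ne h.ne]
  · rw [hA.2, one_apply_eq]
  · rw [hA.1 h, one_apply_ne h.ne']

end IsUnitriangular

lemma IsUnitriangular.one_add_vecMulVec {u v : ι → R} (huv : ∀ i j, j ≤ i → u i * v j = 0) :
    IsUnitriangular (1 + vecMulVec u v) :=
  ⟨fun i j hji => by simp [vecMulVec_apply, one_apply_ne (show j < i from hji).ne', huv i j hji.le],
    fun i => by simp [vecMulVec_apply, huv i i le_rfl]⟩

end Unitriangular

section RankOne

variable {ι R : Type*} [Fintype ι] [DecidableEq ι] [CommRing R] {u v : ι → R}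

lemma one_add_vecMulVec_mul_one_sub (h : v ⬝ᵥ u = 0) :
    (1 + vecMulVec u v) * (1 - vecMulVec u v) = 1 := by
  simp [add_mul, mul_sub, vecMulVec_mul_vecMulVec, h]

lemma one_sub_vecMulVec_mul_one_add (h : v ⬝ᵥ u = 0) :
    (1 - vecMulVec u v) * (1 + vecMulVec u v) = 1 := by
  simp [sub_mul, mul_add, vecMulVec_mul_vecMulVec, h]

end RankOne

section Monomial

variable {ι R : Type*} [DecidableEq ι] [CommRing R]

def monomialMatrix (σ : Equiv.Perm ι) (d : ι → R) : Matrix ι ι R :=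
  of fun i j => if σ j = i then d j else 0

variable {σ τ : Equiv.Perm ι} {d e : ι → R}

lemma monomialMatrix_apply (i j : ι) : monomialMatrix σ d i j = if σ j = i then d j else 0 :=
  rfl

lemma mul_monomialMatrix_apply [Fintype ι] (A : Matrix ι ι R) (i j : ι) :
    (A * monomialMatrix σ d) i j = A i (σ j) * d j := by
  rw [mul_apply, Finset.sum_eq_single (σ j)
    (fun k _ hk => by simp [monomialMatrix_apply, Ne.symm hk]) (by simp)]
  simp [monomialMatrix_apply]

lemma monomialMatrix_mul_apply [Fintype ι] (A : Matrix ι ι R) (i j : ι) :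
    (monomialMatrix σ d * A) i j = d (σ⁻¹ i) * A (σ⁻¹ i) j := by
  rw [mul_apply, Finset.sum_eq_single (σ⁻¹ i) (fun k _ hk => ?_) (by simp)]
  · simp [monomialMatrix_apply]
  · rw [monomialMatrix_apply, if_neg (by rintro rfl; simp at hk), zero_mul]

lemma monomialMatrix_mul_monomialMatrix [Fintype ι] :
    monomialMatrix σ d * monomialMatrix τ e = monomialMatrix (σ * τ) fun j => d (τ j) * e j := by
  ext i j
  rw [mul_monomialMatrix_apply, monomialMatrix_apply, monomialMatrix_apply, Equiv.Perm.mul_apply]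
  split_ifs <;> simp

lemma monomialMatrix_one_left : monomialMatrix 1 d = diagonal d := by
  ext i j
  by_cases h : i = j
  · subst h; simp [monomialMatrix_apply]
  · simp [monomialMatrix_apply, h, Ne.symm h]

lemma monomialMatrix_one_one : monomialMatrix (1 : Equiv.Perm ι) (fun _ => (1 : R)) = 1 := by
  rw [monomialMatrix_one_left, diagonal_one]

lemma submatrix_eq_monomialMatrix_mul_mul [Fintype ι] (A : Matrix ι ι R) :
    A.submatrix σ σ = monomialMatrix σ⁻¹ (fun _ => 1) * A * monomialMatrix σ fun _ => 1 := by
  ext i j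
  simp [mul_monomialMatrix_apply, monomialMatrix_mul_apply]

variable [Fintype ι]

def monomialGL (σ : Equiv.Perm ι) (d : ι → Rˣ) : GL ι R where
  val := monomialMatrix σ fun j => (d j : R)
  inv := monomialMatrix σ⁻¹ fun j => ↑(d (σ⁻¹ j))⁻¹
  val_inv := by simp [monomialMatrix_mul_monomialMatrix, monomialMatrix_one_one]
  inv_val := by simp [monomialMatrix_mul_monomialMatrix, monomialMatrix_one_one]

variable {d e : ι → Rˣ}

@[simp]
lemma coe_monomialGL : (monomialGL σ d : Matrix ι ι R) = monomialMatrix σ fun j => (d j : R) :=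
  rfl

lemma monomialGL_mul_monomialGL :
    monomialGL σ d * monomialGL τ e = monomialGL (σ * τ) fun j => d (τ j) * e j :=
  Units.ext <| by simp [monomialMatrix_mul_monomialMatrix]

lemma monomialGL_inv : (monomialGL σ d)⁻¹ = monomialGL σ⁻¹ fun j => (d (σ⁻¹ j))⁻¹ :=
  Units.ext rfl

lemma monomialGL_one_mul_monomialGL_one :
    monomialGL σ (1 : ι → Rˣ) * monomialGL 1 d = monomialGL σ d := by
  simp [monomialGL_mul_monomialGL]

lemma coe_monomialGL_inv_mul_mul (g : GL ι R) :
    (((monomialGL σ 1)⁻¹ * g * monomialGL σ 1 : GL ι R) : Matrix ι ι R) =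
      (g : Matrix ι ι R).submatrix σ σ := by
  simp [monomialGL_inv, submatrix_eq_monomialMatrix_mul_mul]

lemma monomialGL_mul_monomialGL_one_mul_monomialGL_one (β α : ι → Rˣ) :
    monomialGL σ 1 * monomialGL 1 β * monomialGL 1 α = monomialGL σ (β * α) := by
  simp [monomialGL_mul_monomialGL]
  rfl

lemma monomialGL_one_mul_mul_monomialGL_mul (e₁ e₂ β : ι → Rˣ) (v₁ v₂ : GL ι R) :
    monomialGL 1 e₁ * v₁ * (monomialGL τ 1 * monomialGL 1 β) * (monomialGL 1 e₂ * v₂) =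
      monomialGL 1 e₁ * v₁ * (monomialGL 1 e₁)⁻¹ *
        monomialGL τ (β * fun j => e₁ (τ j) * e₂ j) * v₂ := by
  have hmono : monomialGL 1 e₁ * monomialGL τ 1 * monomialGL 1 β * monomialGL 1 e₂ =
      monomialGL τ (β * fun j => e₁ (τ j) * e₂ j) := by
    simp only [monomialGL_mul_monomialGL, one_mul, mul_one, Equiv.Perm.one_apply]
    congr 1
    funext j
    rw [Pi.one_apply, Pi.mul_apply, mul_one, mul_comm (e₁ (τ j)), mul_assoc]
  rw [← hmono]
  group

end Monomial

section Subgroups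

variable (ι R : Type*) [Fintype ι] [LinearOrder ι] [CommRing R]

def upperUnitriangular : Subgroup (GL ι R) where
  carrier := {g | IsUnitriangular (g : Matrix ι ι R)}
  mul_mem' ha hb := ha.mul hb
  one_mem' := IsUnitriangular.one
  inv_mem' {g} hg := by simpa [coe_units_inv] using hg.inv

def lowerTriangular : Subgroup (GL ι R) where
  carrier := {g | (g : Matrix ι ι R).IsLowerTriangular}
  mul_mem' ha hb := ha.mul hb
  one_mem' := blockTriangular_one
  inv_mem' {g} hg := by simpa [coe_units_inv] using blockTriangular_inv_of_blockTriangular hg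

variable {ι R} {g u : GL ι R}

lemma mem_upperUnitriangular : g ∈ upperUnitriangular ι R ↔ IsUnitriangular (g : Matrix ι ι R) :=
  Iff.rfl

lemma mem_lowerTriangular :
    g ∈ lowerTriangular ι R ↔ (g : Matrix ι ι R).IsLowerTriangular :=
  Iff.rfl

lemma eq_one_of_mem_upperUnitriangular_of_mem_lowerTriangular (hU : g ∈ upperUnitriangular ι R)
    (hL : g ∈ lowerTriangular ι R) : g = 1 :=
  Units.ext (hU.eq_one_of_isLowerTriangular hL)

lemma monomialGL_one_mem_lowerTriangular (d : ι → Rˣ) : monomialGL 1 d ∈ lowerTriangular ι R := by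
  simpa [mem_lowerTriangular, monomialMatrix_one_left] using blockTriangular_diagonal _

lemma monomialGL_one_mul_mul_inv_mem (d : ι → Rˣ) (hu : u ∈ upperUnitriangular ι R) :
    monomialGL 1 d * u * (monomialGL 1 d)⁻¹ ∈ upperUnitriangular ι R := by
  rw [mem_upperUnitriangular, monomialGL_inv]
  simpa [monomialMatrix_one_left] using hu.diagonal_mul_mul_diagonal (e := fun i => (d i : R))
    (f := fun i => ((d i)⁻¹ : Rˣ)) (by simp)

end Subgroups

section BruhatUniqueness

variable {ι R : Type*} [Fintype ι] [LinearOrder ι] [CommRing R] {σ σ' : Equiv.Perm ι}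
  {d d' : ι → Rˣ}

theorem eq_of_unitriangular_mul_monomialGL_eq [Nontrivial R] {v w : GL ι R}
    (hv : v ∈ upperUnitriangular ι R) (hw : w ∈ upperUnitriangular ι R)
    (h : v * monomialGL σ d = monomialGL σ' d' * w) : σ = σ' ∧ d = d' := by
  have hentry (j : ι) : (d j : R) = d' (σ'⁻¹ (σ j)) * (w : Matrix ι ι R) (σ'⁻¹ (σ j)) j := by
    simpa [mul_monomialMatrix_apply, monomialMatrix_mul_apply, hv.2] using
      congrArg (fun x : GL ι R => (x : Matrix ι ι R) (σ j) j) h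
  have hperm : σ'⁻¹ * σ = 1 := Equiv.Perm.eq_one_of_forall_apply_le fun j =>
    not_lt.1 fun hlt => (d j).ne_zero <| by
      rw [hentry, hw.1 (show j < σ'⁻¹ (σ j) from hlt), mul_zero]
  obtain rfl : σ = σ' := (inv_mul_eq_one.1 hperm).symm
  refine ⟨rfl, funext fun j => Units.ext ?_⟩
  simpa [hw.2] using hentry j

theorem eq_of_unitriangular_mul_monomialGL_mul_eq [Nontrivial R] {u₁ u₂ u₁' u₂' : GL ι R}
    (hu₁ : u₁ ∈ upperUnitriangular ι R) (hu₂ : u₂ ∈ upperUnitriangular ι R)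
    (hu₁' : u₁' ∈ upperUnitriangular ι R) (hu₂' : u₂' ∈ upperUnitriangular ι R)
    (h : u₁ * monomialGL σ d * u₂ = u₁' * monomialGL σ' d' * u₂') : σ = σ' ∧ d = d' := by
  refine eq_of_unitriangular_mul_monomialGL_eq (mul_mem (inv_mem hu₁') hu₁)
    (mul_mem hu₂' (inv_mem hu₂)) ?_
  calc u₁'⁻¹ * u₁ * monomialGL σ d = u₁'⁻¹ * (u₁ * monomialGL σ d * u₂) * u₂⁻¹ := by group
    _ = u₁'⁻¹ * (u₁' * monomialGL σ' d' * u₂') * u₂⁻¹ := by rw [h]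
    _ = monomialGL σ' d' * (u₂' * u₂⁻¹) := by group

theorem unitriangular_eq_of_mul_monomialGL_mul_eq {u₁ u₂ u₁' u₂' : GL ι R}
    (hu₂ : u₂ ∈ upperUnitriangular ι R) (hu₂' : u₂' ∈ upperUnitriangular ι R)
    (hl₁ : (monomialGL σ 1)⁻¹ * u₁ * monomialGL σ 1 ∈ lowerTriangular ι R)
    (hl₁' : (monomialGL σ 1)⁻¹ * u₁' * monomialGL σ 1 ∈ lowerTriangular ι R)
    (h : u₁ * monomialGL σ d * u₂ = u₁' * monomialGL σ d * u₂') : u₁ = u₁' ∧ u₂ = u₂' := by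
  set P : GL ι R := monomialGL σ 1
  set D : GL ι R := monomialGL 1 d
  rw [← monomialGL_one_mul_monomialGL_one] at h
  have hD : D ∈ lowerTriangular ι R := monomialGL_one_mem_lowerTriangular d
  have hdiff : u₂' * u₂⁻¹ = D⁻¹ * ((P⁻¹ * u₁' * P)⁻¹ * (P⁻¹ * u₁ * P)) * D :=
    calc u₂' * u₂⁻¹ = (P * D)⁻¹ * u₁'⁻¹ * (u₁' * (P * D) * u₂') * u₂⁻¹ := by group
      _ = (P * D)⁻¹ * u₁'⁻¹ * (u₁ * (P * D) * u₂) * u₂⁻¹ := by rw [h]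
      _ = D⁻¹ * ((P⁻¹ * u₁' * P)⁻¹ * (P⁻¹ * u₁ * P)) * D := by group
  have h₂ : u₂' * u₂⁻¹ = 1 := eq_one_of_mem_upperUnitriangular_of_mem_lowerTriangular
    (mul_mem hu₂' (inv_mem hu₂))
    (hdiff ▸ mul_mem (mul_mem (inv_mem hD) (mul_mem (inv_mem hl₁') hl₁)) hD)
  obtain rfl : u₂' = u₂ := mul_inv_eq_one.1 h₂
  exact ⟨mul_right_cancel (mul_right_cancel h), rfl⟩

end BruhatUniqueness

section InsertPivot

variable {R : Type*} [CommRing R] {n : ℕ}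

/-- The matrix with `x` at `(i₀, j₀)`, zeros in the rest of row `i₀` and column `j₀`, and `A`
in the remaining rows and columns. -/
def insertPivot (i₀ j₀ : Fin (n + 1)) (x : R) (A : Matrix (Fin n) (Fin n) R) :
    Matrix (Fin (n + 1)) (Fin (n + 1)) R :=
  of <| Fin.insertNth (α := fun _ => Fin (n + 1) → R) i₀ (Pi.single j₀ x)
    fun p => Fin.insertNth (α := fun _ => R) j₀ 0 (A p)

section

variable (i₀ j₀ : Fin (n + 1)) (x : R) (A : Matrix (Fin n) (Fin n) R)

@[simp]
lemma insertPivot_apply_same_same : insertPivot i₀ j₀ x A i₀ j₀ = x := by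
  simp [insertPivot]

@[simp]
lemma insertPivot_apply_same_succAbove (q : Fin n) :
    insertPivot i₀ j₀ x A i₀ (j₀.succAbove q) = 0 := by
  simp [insertPivot, Fin.succAbove_ne]

@[simp]
lemma insertPivot_apply_succAbove_same (p : Fin n) :
    insertPivot i₀ j₀ x A (i₀.succAbove p) j₀ = 0 := by
  simp [insertPivot]

@[simp]
lemma insertPivot_apply_succAbove_succAbove (p q : Fin n) :
    insertPivot i₀ j₀ x A (i₀.succAbove p) (j₀.succAbove q) = A p q := by
  simp [insertPivot]

lemma insertPivot_mul_insertPivot (k₀ : Fin (n + 1)) (y : R) (B : Matrix (Fin n) (Fin n) R) :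
    insertPivot i₀ j₀ x A * insertPivot j₀ k₀ y B = insertPivot i₀ k₀ (x * y) (A * B) := by
  ext i k
  induction i using Fin.succAboveCases i₀ <;> induction k using Fin.succAboveCases k₀ <;>
    simp [mul_apply, Fin.sum_univ_succAbove _ j₀]

lemma insertPivot_monomialMatrix (σ : Equiv.Perm (Fin n)) (d : Fin n → R) :
    insertPivot i₀ 0 x (monomialMatrix σ d) =
      monomialMatrix (Fin.insertPerm i₀ σ) (Fin.cons x d) := by
  ext i j
  induction j using Fin.cases <;> induction i using Fin.succAboveCases i₀ <;>
    simp [insertPivot, monomialMatrix_apply, Fin.succAbove_ne, (Fin.succAbove_ne _ _).symm]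

lemma det_insertPivot : (insertPivot i₀ 0 x A).det = (-1) ^ (i₀ : ℕ) * x * A.det := by
  have hA : (insertPivot i₀ 0 x A).submatrix i₀.succAbove Fin.succ = A := by
    ext p q
    simp [insertPivot]
  rw [det_succ_column_zero, Fin.sum_univ_succAbove _ i₀]
  simp only [insertPivot_apply_same_same, insertPivot_apply_succAbove_same, hA, mul_zero, zero_mul,
    Finset.sum_const_zero, add_zero]

end

lemma IsUnitriangular.insertPivot (i₀ : Fin (n + 1)) {A : Matrix (Fin n) (Fin n) R}
    (hA : IsUnitriangular A) :
    IsUnitriangular (insertPivot i₀ i₀ 1 A) := by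
  refine ⟨fun i j hji => ?_, fun i => ?_⟩
  · induction i using Fin.succAboveCases i₀ <;> induction j using Fin.succAboveCases i₀
    · exact absurd hji (lt_irrefl _)
    · simp
    · simp
    · simpa using hA.1 (Fin.succAbove_lt_succAbove_iff.1 hji)
  · induction i using Fin.succAboveCases i₀ <;> simp [hA.2]

lemma eq_insertPivot_of_pivot (N : Matrix (Fin (n + 1)) (Fin (n + 1)) R)
    {i₀ : Fin (n + 1)} (hcol : ∀ i, i ≠ i₀ → N i 0 = 0) (hrow : ∀ j, j ≠ 0 → N i₀ j = 0) :
    N = insertPivot i₀ 0 (N i₀ 0) (N.submatrix i₀.succAbove Fin.succ) := by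
  ext i j
  induction i using Fin.succAboveCases i₀ <;> induction j using Fin.cases <;>
    simp [insertPivot, hrow, hcol, Fin.succAbove_ne]

lemma isLowerTriangular_submatrix_insertPerm {i₀ : Fin (n + 1)}
    {σ : Equiv.Perm (Fin n)} {L : Matrix (Fin (n + 1)) (Fin (n + 1)) R}
    {A : Matrix (Fin n) (Fin n) R} (hL : ∀ i j, i ≠ j → j ≠ i₀ → L i j = 0)
    (hA : (A.submatrix σ σ).IsLowerTriangular) :
    ((L * insertPivot i₀ i₀ 1 A).submatrix (Fin.insertPerm i₀ σ)
      (Fin.insertPerm i₀ σ)).IsLowerTriangular := by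
  set τ := Fin.insertPerm i₀ σ
  rw [← submatrix_mul_equiv _ _ _ τ]
  refine BlockTriangular.mul (fun k l hkl => ?_) (fun k l hkl => ?_)
  · have hkl : k < l := hkl
    refine hL _ _ (τ.injective.ne hkl.ne) fun h => (Fin.not_lt_zero k) ?_
    rwa [← τ.injective (h.trans (Fin.insertPerm_zero i₀ σ).symm)]
  · have hkl : k < l := hkl
    induction l using Fin.cases with
    | zero => exact absurd hkl (Fin.not_lt_zero k)
    | succ q =>
      induction k using Fin.cases with
      | zero => simp [τ]
      | succ p => simpa [τ] using hA (Fin.succ_lt_succ_iff.1 hkl)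

end InsertPivot

section Elimination

variable {F : Type*} [Field F] {n : ℕ}

lemma exists_eq_unitriangular_mul_of_pivot (M : Matrix (Fin (n + 1)) (Fin (n + 1)) F)
    {i₀ : Fin (n + 1)} (hpiv : M i₀ 0 ≠ 0) (hbelow : ∀ i, i₀ < i → M i 0 = 0) :
    ∃ L N : Matrix (Fin (n + 1)) (Fin (n + 1)) F, IsUnitriangular L ∧
      (∀ i j, i ≠ j → j ≠ i₀ → L i j = 0) ∧ M = L * N ∧ (∀ i, i ≠ i₀ → N i 0 = 0) ∧
      N i₀ = M i₀ := by
  set c : Fin (n + 1) → F := fun i => if i < i₀ then M i 0 / M i₀ 0 else 0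
  set e : Fin (n + 1) → F := Pi.single i₀ 1
  have hc : e ⬝ᵥ c = 0 := by simp [e, c]
  have hN : (1 - vecMulVec c e) * M = M - vecMulVec c (M i₀) := by
    rw [sub_mul, one_mul, vecMulVec_mul, single_one_vecMul]; rfl
  refine ⟨1 + vecMulVec c e, (1 - vecMulVec c e) * M, IsUnitriangular.one_add_vecMulVec ?_,
    fun i j hij hj => ?_, ?_, fun i hi => ?_, ?_⟩
  · intro i j hji
    by_cases hj : j = i₀
    · subst hj; simp [c, not_lt.2 hji]
    · simp [e, hj]
  · simp [vecMulVec_apply, one_apply_ne hij, e, hj]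
  · rw [← mul_assoc, one_add_vecMulVec_mul_one_sub hc, one_mul]
  · rw [hN]
    rcases hi.lt_or_gt with h | h
    · simp [vecMulVec_apply, c, h, hpiv]
    · simp [vecMulVec_apply, c, h.not_gt, hbelow i h]
  · ext j
    simp [vecMulVec_apply, hN, c]

lemma exists_eq_mul_unitriangular_of_pivot (N : Matrix (Fin (n + 1)) (Fin (n + 1)) F)
    {i₀ : Fin (n + 1)} (hpiv : N i₀ 0 ≠ 0) :
    ∃ N' R : Matrix (Fin (n + 1)) (Fin (n + 1)) F, IsUnitriangular R ∧ N = N' * R ∧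
      (∀ i, N' i 0 = N i 0) ∧ ∀ j, j ≠ 0 → N' i₀ j = 0 := by
  set r : Fin (n + 1) → F := fun j => if j = 0 then 0 else N i₀ j / N i₀ 0
  set e : Fin (n + 1) → F := Pi.single 0 1
  have hr : r ⬝ᵥ e = 0 := by simp [e, r]
  have hN' : N * (1 - vecMulVec e r) = N - vecMulVec (fun i => N i 0) r := by
    rw [mul_sub, mul_one, mul_vecMulVec, mulVec_single_one]; rfl
  refine ⟨N * (1 - vecMulVec e r), 1 + vecMulVec e r, IsUnitriangular.one_add_vecMulVec ?_,
    ?_, fun i => ?_, fun j hj => ?_⟩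
  · intro i j hji
    by_cases hi : i = 0
    · subst hi; simp [r, Fin.le_zero_iff.1 hji]
    · simp [e, hi]
  · rw [mul_assoc, one_sub_vecMulVec_mul_one_add hr, mul_one]
  · simp [vecMulVec_apply, hN', r]
  · simp [vecMulVec_apply, hN', r, hj, mul_div_cancel₀ _ hpiv]

theorem exists_eq_unitriangular_mul_insertPivot_mul_unitriangular
    (M : Matrix (Fin (n + 1)) (Fin (n + 1)) F) (hM : IsUnit M.det) :
    ∃ (i₀ : Fin (n + 1)) (x : F) (B : Matrix (Fin n) (Fin n) F)
      (L R : Matrix (Fin (n + 1)) (Fin (n + 1)) F), x ≠ 0 ∧ IsUnit B.det ∧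
      IsUnitriangular L ∧ IsUnitriangular R ∧ (∀ i j, i ≠ j → j ≠ i₀ → L i j = 0) ∧
      M = L * insertPivot i₀ 0 x B * R := by
  classical
  obtain ⟨i₀, hpiv, hbelow⟩ : ∃ i₀, M i₀ 0 ≠ 0 ∧ ∀ i, i₀ < i → M i 0 = 0 := by
    have hcol : (Finset.univ.filter fun i => M i 0 ≠ 0).Nonempty := by
      by_contra! h
      exact hM.ne_zero (det_eq_zero_of_column_eq_zero 0 (by simpa using h))
    obtain ⟨i₀, hi₀, hmax⟩ := Finset.exists_max_image _ id hcol
    exact ⟨i₀, (Finset.mem_filter.1 hi₀).2,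
      fun i hi => by_contra fun h => (hmax i (by simp [h])).not_gt hi⟩
  obtain ⟨L, N, hL, hLcol, rfl, hNcol, hNrow⟩ := exists_eq_unitriangular_mul_of_pivot M hpiv hbelow
  obtain ⟨N', R, hR, rfl, hN'col, hN'row⟩ :=
    exists_eq_mul_unitriangular_of_pivot N (show N i₀ 0 ≠ 0 by rwa [hNrow])
  have hpivot := eq_insertPivot_of_pivot N' (fun i hi => by rw [hN'col, hNcol i hi]) hN'row
  have hdet := hM
  rw [det_mul, det_mul, hL.det_eq_one, hR.det_eq_one, hpivot, det_insertPivot] at hdet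
  exact ⟨i₀, N' i₀ 0, N'.submatrix i₀.succAbove Fin.succ, L, R, by rwa [hN'col, hNrow],
    isUnit_of_mul_isUnit_right (by simpa using hdet), hL, hR, hLcol, by rw [← hpivot, mul_assoc]⟩

theorem exists_bruhat_decomposition : ∀ {n : ℕ} (M : Matrix (Fin n) (Fin n) F), IsUnit M.det →
    ∃ (σ : Equiv.Perm (Fin n)) (d : Fin n → F) (u₁ u₂ : Matrix (Fin n) (Fin n) F),
      IsUnitriangular u₁ ∧ IsUnitriangular u₂ ∧ (u₁.submatrix σ σ).IsLowerTriangular ∧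
      (∀ j, d j ≠ 0) ∧ M = u₁ * monomialMatrix σ d * u₂
  | 0, M, _ => ⟨1, 0, 1, 1, .one, .one, fun i => i.elim0, fun j => j.elim0, Subsingleton.elim _ _⟩
  | n + 1, M, hM => by
    obtain ⟨i₀, x, B, L, R, hx, hB, hL, hR, hLcol, rfl⟩ :=
      exists_eq_unitriangular_mul_insertPivot_mul_unitriangular M hM
    obtain ⟨σ, d, u₁, u₂, hu₁, hu₂, hσ, hd, rfl⟩ := exists_bruhat_decomposition B hB
    refine ⟨Fin.insertPerm i₀ σ, Fin.cons x d, L * insertPivot i₀ i₀ 1 u₁,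
      insertPivot 0 0 1 u₂ * R, hL.mul (hu₁.insertPivot i₀), (hu₂.insertPivot 0).mul hR,
      isLowerTriangular_submatrix_insertPerm hLcol hσ, Fin.cases hx hd, ?_⟩
    have hsplit : insertPivot i₀ 0 x (u₁ * monomialMatrix σ d * u₂) = insertPivot i₀ i₀ 1 u₁ *
        insertPivot i₀ 0 x (monomialMatrix σ d) * insertPivot 0 0 1 u₂ := by
      rw [insertPivot_mul_insertPivot, insertPivot_mul_insertPivot, one_mul, mul_one]
    rw [hsplit, insertPivot_monomialMatrix]
    simp only [mul_assoc]

end Elimination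

namespace GeneralLinearGroup

variable {F : Type*} [Field F] {n : ℕ}

theorem exists_bruhat_decomposition (g : GL (Fin n) F) :
    ∃ (σ : Equiv.Perm (Fin n)) (d : Fin n → Fˣ) (u₁ u₂ : GL (Fin n) F),
      u₁ ∈ upperUnitriangular (Fin n) F ∧ u₂ ∈ upperUnitriangular (Fin n) F ∧
      (monomialGL σ 1)⁻¹ * u₁ * monomialGL σ 1 ∈ lowerTriangular (Fin n) F ∧
      g = u₁ * monomialGL σ d * u₂ := by
  obtain ⟨σ, d, u₁, u₂, hu₁, hu₂, hσ, hd, hg⟩ :=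
    Matrix.exists_bruhat_decomposition (g : Matrix (Fin n) (Fin n) F)
      ((isUnit_iff_isUnit_det _).1 g.isUnit)
  refine ⟨σ, fun j => Units.mk0 (d j) (hd j), nonsingInvUnit u₁ (by simp [hu₁.det_eq_one]),
    nonsingInvUnit u₂ (by simp [hu₂.det_eq_one]), hu₁, hu₂, ?_, Units.ext ?_⟩
  · rw [mem_lowerTriangular, coe_monomialGL_inv_mul_mul]
    exact hσ
  · exact hg

end GeneralLinearGroup

end Matrix

section Factorization

open Matrix

variable {F : Type} [Field F] {n : ℕ}

lemma mem_Uset_iff {g : GLn F n} : g ∈ Uset F n ↔ g ∈ upperUnitriangular (Fin n) F :=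
  Iff.rfl

lemma mem_Wset_iff {g : GLn F n} : g ∈ Wset F n ↔ ∃ σ, g = monomialGL σ 1 := by
  refine ⟨fun ⟨σ, hσ⟩ => ⟨σ, Units.ext <| ext fun i j => ?_⟩, fun ⟨σ, hσ⟩ => ⟨σ, fun i j => ?_⟩⟩
  · simp [hσ, monomialMatrix_apply]
  · simp [hσ, monomialMatrix_apply]

lemma mem_Hbset_iff {b : ℕ} (hb : b ≠ 0) {g : GLn F n} :
    g ∈ Hbset F n b ↔ ∃ β : Fin n → Fˣ, β ^ b = 1 ∧ g = monomialGL 1 β := by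
  constructor
  · rintro ⟨hoff, hdiag⟩
    have hne (i : Fin n) : (g : Matrix (Fin n) (Fin n) F) i i ≠ 0 := fun h0 => by
      simpa [h0, zero_pow hb] using hdiag i
    refine ⟨fun i => Units.mk0 _ (hne i), funext fun i => Units.ext (by simp [hdiag]),
      Units.ext <| ext fun i j => ?_⟩
    by_cases hij : i = j
    · subst hij; simp [monomialMatrix_apply]
    · simp [monomialMatrix_apply, hoff i j hij, Ne.symm hij]
  · rintro ⟨β, hβ, rfl⟩
    refine ⟨fun i j hij => by simp [monomialMatrix_apply, Ne.symm hij], fun i => ?_⟩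
    simpa [monomialMatrix_apply] using congrArg Units.val (congrFun hβ i)

lemma mem_Haset_iff {a : ℕ} (ha : a ≠ 0) {g : GLn F n} :
    g ∈ Haset F n a ↔ ∃ α : Fin n → Fˣ, α ^ a = 1 ∧ g = monomialGL 1 α :=
  mem_Hbset_iff ha

lemma monomialGL_revPerm_eq {w0 : GLn F n}
    (hw0 : ∀ i j : Fin n,
      (w0 : Matrix (Fin n) (Fin n) F) i j = if (i : ℕ) + (j : ℕ) + 1 = n then 1 else 0) :
    w0 = monomialGL Fin.revPerm 1 := by
  refine Units.ext <| ext fun i j => ?_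
  have hrev : Fin.rev j = i ↔ (i : ℕ) + j + 1 = n := by
    rw [Fin.ext_iff, Fin.val_rev]; omega
  simp [hw0, monomialMatrix_apply, hrev]

lemma exists_mem_Uset_conj_iff {σ : Equiv.Perm (Fin n)} {u : GLn F n} (hu : u ∈ Uset F n) :
    (∃ v ∈ Uset F n, (monomialGL σ 1)⁻¹ * u * monomialGL σ 1 =
        monomialGL Fin.revPerm 1 * v * monomialGL Fin.revPerm 1) ↔
      (monomialGL σ 1)⁻¹ * u * monomialGL σ 1 ∈ lowerTriangular (Fin n) F := by
  set w0 : GLn F n := monomialGL Fin.revPerm 1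
  set x := (monomialGL σ 1)⁻¹ * u * monomialGL σ 1
  have hw0 : w0⁻¹ = w0 := by simp [w0, monomialGL_inv, Equiv.Perm.inv_def]; rfl
  have hconj (v : GLn F n) : w0 * v * w0 = w0⁻¹ * v * w0 := by rw [hw0]
  have hww : w0 * w0 = 1 := by simpa [hw0] using mul_inv_cancel w0
  constructor
  · rintro ⟨v, hv, hx⟩
    rw [hx, hconj, mem_lowerTriangular, coe_monomialGL_inv_mul_mul]
    exact fun i j hij => hv.1 i.rev j.rev (Fin.rev_lt_rev.2 (OrderDual.toDual_lt_toDual.1 hij))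
  · intro hx
    refine ⟨w0 * x * w0, ?_, ?_⟩
    · rw [mem_Uset_iff, mem_upperUnitriangular, hconj, coe_monomialGL_inv_mul_mul]
      refine ⟨fun i j hij => hx (Fin.rev_lt_rev.2 hij), fun i => ?_⟩
      rw [submatrix_apply, coe_monomialGL_inv_mul_mul]
      exact hu.2 _
    · rw [show w0 * (w0 * x * w0) * w0 = (w0 * w0) * x * (w0 * w0) by group, hww, one_mul, mul_one]

section

variable [Fintype F] {a b : ℕ}

lemma FiniteField.pi_units_pow_card_sub_one_eq_one {ι : Type*} (d : ι → Fˣ) :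
    d ^ (Fintype.card F - 1) = 1 :=
  funext fun j => by classical rw [Pi.pow_apply, ← Fintype.card_units, pow_card_eq_one]; rfl

lemma ne_zero_and_ne_zero_of_mul_eq_card_sub_one (hab : a * b = Fintype.card F - 1) :
    a ≠ 0 ∧ b ≠ 0 := by
  have := Fintype.one_lt_card (α := F)
  exact Nat.mul_ne_zero_iff.1 (by omega)

theorem existsUnique_bruhat_factorization (hab : a * b = Fintype.card F - 1)
    (hcop : a.Coprime b) (g : GLn F n) :
    ∃! p : GLn F n × GLn F n × GLn F n × GLn F n × GLn F n,
      p.2.1 ∈ Wset F n ∧ p.1 ∈ Uset F n ∧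
      (∃ v ∈ Uset F n, p.2.1⁻¹ * p.1 * p.2.1 =
        monomialGL Fin.revPerm 1 * v * monomialGL Fin.revPerm 1) ∧
      p.2.2.1 ∈ Hbset F n b ∧ p.2.2.2.1 ∈ Haset F n a ∧ p.2.2.2.2 ∈ Uset F n ∧
      g = p.1 * p.2.1 * p.2.2.1 * p.2.2.2.1 * p.2.2.2.2 := by
  obtain ⟨ha, hb⟩ := ne_zero_and_ne_zero_of_mul_eq_card_sub_one hab
  refine existsUnique_of_exists_of_unique ?_ ?_
  · obtain ⟨σ, d, u₁, u₂, hu₁, hu₂, hl, rfl⟩ := GeneralLinearGroup.exists_bruhat_decomposition g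
    obtain ⟨β, α, hβ, hα, rfl⟩ :=
      exists_mul_eq_of_pow_mul_eq_one hcop (hab ▸ FiniteField.pi_units_pow_card_sub_one_eq_one d)
    refine ⟨(u₁, monomialGL σ 1, monomialGL 1 β, monomialGL 1 α, u₂), mem_Wset_iff.2 ⟨σ, rfl⟩,
      hu₁, (exists_mem_Uset_conj_iff hu₁).2 hl, (mem_Hbset_iff hb).2 ⟨β, hβ, rfl⟩,
      (mem_Haset_iff ha).2 ⟨α, hα, rfl⟩, hu₂, ?_⟩
    simp only [← monomialGL_mul_monomialGL_one_mul_monomialGL_one, mul_assoc]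
  · rintro ⟨u₁, w, y, z, u₂⟩ ⟨u₁', w', y', z', u₂'⟩ ⟨hw, hu₁, hl, hy, hz, hu₂, hg⟩
      ⟨hw', hu₁', hl', hy', hz', hu₂', hg'⟩
    obtain ⟨σ, rfl⟩ := mem_Wset_iff.1 hw
    obtain ⟨σ', rfl⟩ := mem_Wset_iff.1 hw'
    obtain ⟨β, hβ, rfl⟩ := (mem_Hbset_iff hb).1 hy
    obtain ⟨β', hβ', rfl⟩ := (mem_Hbset_iff hb).1 hy'
    obtain ⟨α, hα, rfl⟩ := (mem_Haset_iff ha).1 hz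
    obtain ⟨α', hα', rfl⟩ := (mem_Haset_iff ha).1 hz'
    rw [mul_assoc u₁, mul_assoc u₁, monomialGL_mul_monomialGL_one_mul_monomialGL_one] at hg
    rw [mul_assoc u₁', mul_assoc u₁', monomialGL_mul_monomialGL_one_mul_monomialGL_one] at hg'
    have h := hg.symm.trans hg'
    obtain ⟨rfl, hd⟩ := eq_of_unitriangular_mul_monomialGL_mul_eq hu₁ hu₂ hu₁' hu₂' h
    obtain ⟨rfl, rfl⟩ := eq_and_eq_of_mul_eq_mul_of_pow_eq_one hcop hβ hα hβ' hα' hd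
    obtain ⟨rfl, rfl⟩ := unitriangular_eq_of_mul_monomialGL_mul_eq hu₂ hu₂'
      ((exists_mem_Uset_conj_iff hu₁).1 hl) ((exists_mem_Uset_conj_iff hu₁').1 hl') h
    rfl

theorem existsUnique_WHbset_double_coset_rep (hab : a * b = Fintype.card F - 1)
    (hcop : a.Coprime b) (g : GLn F n) :
    ∃! x : GLn F n, x ∈ WHbset F n b ∧
      ∃ c1 ∈ Baset F n a, ∃ c2 ∈ Baset F n a, g = c1 * x * c2 := by
  obtain ⟨ha, hb⟩ := ne_zero_and_ne_zero_of_mul_eq_card_sub_one hab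
  obtain ⟨σ, d, u₁, u₂, hu₁, hu₂, -, rfl⟩ := GeneralLinearGroup.exists_bruhat_decomposition g
  obtain ⟨β, α, hβ, hα, rfl⟩ :=
    exists_mul_eq_of_pow_mul_eq_one hcop (hab ▸ FiniteField.pi_units_pow_card_sub_one_eq_one d)
  have hone : (1 : GLn F n) ∈ Haset F n a := ⟨fun i j hij => one_apply_ne hij, fun i => by simp⟩
  refine ⟨monomialGL σ 1 * monomialGL 1 β,
    ⟨⟨_, mem_Wset_iff.2 ⟨σ, rfl⟩, _, (mem_Hbset_iff hb).2 ⟨β, hβ, rfl⟩, rfl⟩,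
      1 * u₁, ⟨1, hone, u₁, hu₁, rfl⟩, monomialGL 1 α * u₂,
      ⟨_, (mem_Haset_iff ha).2 ⟨α, hα, rfl⟩, u₂, hu₂, rfl⟩, ?_⟩, ?_⟩
  · rw [← monomialGL_mul_monomialGL_one_mul_monomialGL_one]
    group
  · rintro _ ⟨⟨w, hw, y, hy, rfl⟩, _, ⟨h₁, hh₁, v₁, hv₁, rfl⟩, _, ⟨h₂, hh₂, v₂, hv₂, rfl⟩, hg⟩
    obtain ⟨τ, rfl⟩ := mem_Wset_iff.1 hw
    obtain ⟨β', hβ', rfl⟩ := (mem_Hbset_iff hb).1 hy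
    obtain ⟨e₁, he₁, rfl⟩ := (mem_Haset_iff ha).1 hh₁
    obtain ⟨e₂, he₂, rfl⟩ := (mem_Haset_iff ha).1 hh₂
    rw [monomialGL_one_mul_mul_monomialGL_mul] at hg
    obtain ⟨rfl, hd⟩ := eq_of_unitriangular_mul_monomialGL_mul_eq hu₁ hu₂
      (monomialGL_one_mul_mul_inv_mem e₁ hv₁) hv₂ hg
    have he : (fun j => e₁ (σ j) * e₂ j) ^ a = 1 := funext fun j => by
      have h₁ := congrFun he₁ (σ j)
      have h₂ := congrFun he₂ j
      simp only [Pi.pow_apply, Pi.one_apply] at h₁ h₂ ⊢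
      rw [mul_pow, h₁, h₂, one_mul]
    obtain ⟨rfl, -⟩ := eq_and_eq_of_mul_eq_mul_of_pow_eq_one hcop hβ hα hβ' he hd
    rfl

end

end Factorization

theorem unique_factorization_and_double_coset_reps
    (F : Type) [Field F] [Fintype F] (n a b : ℕ)
    (hab : a * b = Fintype.card F - 1) (hcop : Nat.Coprime a b)
    (w0 : GLn F n)
    (hw0 : ∀ i j : Fin n,
      (w0 : Matrix (Fin n) (Fin n) F) i j = if (i : ℕ) + (j : ℕ) + 1 = n then 1 else 0) :
    (∀ g : GLn F n,
      ∃! p : GLn F n × GLn F n × GLn F n × GLn F n × GLn F n,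
        p.2.1 ∈ Wset F n ∧
        p.1 ∈ Uset F n ∧ (∃ v ∈ Uset F n, p.2.1⁻¹ * p.1 * p.2.1 = w0 * v * w0) ∧
        p.2.2.1 ∈ Hbset F n b ∧ p.2.2.2.1 ∈ Haset F n a ∧ p.2.2.2.2 ∈ Uset F n ∧
        g = p.1 * p.2.1 * p.2.2.1 * p.2.2.2.1 * p.2.2.2.2) ∧
    (∀ g : GLn F n, ∃! x : GLn F n, x ∈ WHbset F n b ∧
      ∃ c1 ∈ Baset F n a, ∃ c2 ∈ Baset F n a, g = c1 * x * c2) := by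
  obtain rfl := monomialGL_revPerm_eq hw0
  exact ⟨existsUnique_bruhat_factorization hab hcop, existsUnique_WHbset_double_coset_rep hab hcop⟩
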